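/- Let E be a finite-dimensional real inner product space, K ⊆ E a self-dual closed convex cone, and consider (NCP): minimize f(x) subject to g(x) ∈ K and h(x) = 0, with f : ℝⁿ → ℝ, g : ℝⁿ → E, h : ℝⁿ → ℝᵖ continuously differentiable. Let x* be a KKT point, i.e. g(x*) ∈ K, h(x*) = 0, and there exist ω* ∈ K and μ* ∈ ℝᵖ with ∇f(x*) − Dg(x*)*[ω*] + Dh(x*)ᵀμ* = 0 and ⟨g(x*), ω*⟩ = 0. If strict complementarity holds, i.e. −ω* belongs to the relative (intrinsic) interior of the polar cone T_K(g(x*))° = {w ∈ E : ⟨w,y⟩ ≤ 0 for all y ∈ T_K(g(x*))}, then the critical cone C(x*) = {d ∈ ℝⁿ : ⟨∇f(x*), d⟩ = 0, Dh(x*)d = 0, Dg(x*)[d] ∈ T_K(g(x*))} is a linear subspace of ℝⁿ, i.e. C(x*) = lin(C(x*)) = C(x*) ∩ (−C(x*)). -/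

import Mathlib

/-!
STATEMENT 15: Under strict complementarity, the critical cone of (NCP) at a
KKT point is a linear subspace (it equals its lineality space).
-/

open Filter Topology Set
open scoped InnerProductSpace Pointwise

/-- The (Bouligand) tangent cone to `K` at `w`. -/
def tangentCone' {E : Type*} [NormedAddCommGroup E] [NormedSpace ℝ E] (K : Set E) (w : E) :
    Set E :=
  {v | ∃ (dk : ℕ → E) (ak : ℕ → ℝ), Tendsto dk atTop (𝓝 v) ∧ Tendsto ak atTop (𝓝 0) ∧
    (∀ k, 0 < ak k) ∧ ∀ k, w + ak k • dk k ∈ K}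

/-- The critical cone of (NCP) at `xs`. -/
noncomputable def critCone {n p : ℕ} {E : Type*} [NormedAddCommGroup E]
    [InnerProductSpace ℝ E] [FiniteDimensional ℝ E] (K : Set E)
    (f : EuclideanSpace ℝ (Fin n) → ℝ) (g : EuclideanSpace ℝ (Fin n) → E)
    (h : EuclideanSpace ℝ (Fin n) → EuclideanSpace ℝ (Fin p))
    (xs : EuclideanSpace ℝ (Fin n)) : Set (EuclideanSpace ℝ (Fin n)) :=
  {d | ⟪gradient f xs, d⟫_ℝ = 0 ∧ fderiv ℝ h xs d = 0 ∧
    fderiv ℝ g xs d ∈ tangentCone' K (g xs)}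

/-!
Let `d` be critical and `v = Dg(x*)[d]`. Pairing the stationarity equation with `d` gives
`⟪ω, v⟫ = 0`. The functional `⟪·, v⟫` is nonpositive on the polar `T°` of `T = T_K(g(x*))` and
vanishes at `-ω ∈ ri T°`; moving from `-ω` slightly away from any `u ∈ T°` stays in `T°`, which
forces `⟪u, v⟫ = 0` on all of `T°`. As `K` is convex, `T` is the closure of the cone of feasible
directions, a closed convex cone, so `T = T°°` contains `-v`.
-/

section IntrinsicInterior

variable {E : Type*} [NormedAddCommGroup E] [NormedSpace ℝ E] {P : Set E} {y u : E}

lemma exists_pos_add_smul_sub_mem_of_mem_intrinsicInterior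
    (hy : y ∈ intrinsicInterior ℝ P) (hu : u ∈ P) : ∃ ε : ℝ, 0 < ε ∧ y + ε • (y - u) ∈ P := by
  obtain ⟨z, hz, rfl⟩ := mem_intrinsicInterior.1 hy
  let path : ℝ → affineSpan ℝ P := fun s =>
    ⟨AffineMap.lineMap (z : E) u (-s),
      AffineMap.lineMap_mem _ z.2 (subset_affineSpan ℝ P hu)⟩
  have hpath : Continuous path := by
    apply Continuous.subtype_mk
    fun_prop
  have hpath0 : path 0 = z := by ext; simp [path]
  have hnhds : ∀ᶠ s in 𝓝 (0 : ℝ), path s ∈ interior ((↑) ⁻¹' P) :=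
    hpath.continuousAt.preimage_mem_nhds (by rw [hpath0]; exact isOpen_interior.mem_nhds hz)
  obtain ⟨ε, hεP, hε⟩ :=
    ((hnhds.filter_mono nhdsWithin_le_nhds).and (self_mem_nhdsWithin (s := Ioi 0))).exists
  refine ⟨ε, hε, ?_⟩
  have := interior_subset hεP
  simp only [path, mem_preimage, AffineMap.lineMap_apply] at this
  convert this using 1
  simp only [vsub_eq_sub, vadd_eq_add, neg_smul, ← smul_neg, neg_sub]
  abel

lemma eq_zero_of_nonpos_of_mem_intrinsicInterior (ℓ : E →ₗ[ℝ] ℝ) (hℓ : ∀ w ∈ P, ℓ w ≤ 0)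
    (hy : y ∈ intrinsicInterior ℝ P) (hℓy : ℓ y = 0) (hu : u ∈ P) : ℓ u = 0 := by
  obtain ⟨ε, hε, hmem⟩ := exists_pos_add_smul_sub_mem_of_mem_intrinsicInterior hy hu
  have := hℓ _ hmem
  rw [map_add, map_smul, map_sub, hℓy, smul_eq_mul] at this
  exact le_antisymm (hℓ u hu) (by nlinarith)

end IntrinsicInterior

section TangentCone

variable {E : Type*} [NormedAddCommGroup E] [NormedSpace ℝ E] {K : Set E} {x : E}

lemma Convex.add_smul_mem_of_le (hK : Convex ℝ K) (hx : x ∈ K) {v : E} {c s : ℝ}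
    (hc : x + c • v ∈ K) (hs₀ : 0 ≤ s) (hsc : s ≤ c) : x + s • v ∈ K := by
  rcases hs₀.eq_or_lt with rfl | hs
  · simpa using hx
  have hc₀ : 0 < c := hs.trans_le hsc
  have := hK.add_smul_mem hx hc ⟨div_nonneg hs₀ hc₀.le, (div_le_one hc₀).2 hsc⟩
  rwa [smul_smul, div_mul_cancel₀ _ hc₀.ne'] at this

lemma Convex.tangentCone'_eq_closure (hK : Convex ℝ K) (hx : x ∈ K) :
    tangentCone' K x = closure {v | ∃ c : ℝ, 0 < c ∧ x + c • v ∈ K} := by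
  ext v
  constructor
  · rintro ⟨d, a, hd, -, ha, hmem⟩
    exact mem_closure_of_tendsto hd (.of_forall fun k => ⟨a k, ha k, hmem k⟩)
  · intro hv
    obtain ⟨d, hdmem, hd⟩ := mem_closure_iff_seq_limit.1 hv
    choose c hc hcmem using hdmem
    have ha : ∀ k : ℕ, 0 < min (c k) (1 / (k + 1)) :=
      fun k => lt_min (hc k) Nat.one_div_pos_of_nat
    refine ⟨d, _, hd, ?_, ha,
      fun k => hK.add_smul_mem_of_le hx (hcmem k) (ha k).le (min_le_left _ _)⟩
    exact squeeze_zero (fun k => (ha k).le) (fun k => min_le_right _ _)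
      tendsto_one_div_add_atTop_nhds_zero_nat

lemma Convex.mem_hull_vadd_neg_iff (hK : Convex ℝ K) {v : E} :
    v ∈ ConvexCone.hull ℝ (-x +ᵥ K) ↔ ∃ c : ℝ, 0 < c ∧ x + c • v ∈ K := by
  have hmem : ∀ c : ℝ, c ≠ 0 → (v ∈ c • (-x +ᵥ K) ↔ x + c⁻¹ • v ∈ K) := fun c hc => by
    rw [mem_smul_set_iff_inv_smul_mem₀ hc, mem_vadd_set_iff_neg_vadd_mem, neg_neg, vadd_eq_add]
  rw [ConvexCone.mem_hull_of_convex (hK.vadd _)]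
  constructor
  · rintro ⟨c, hc, hv⟩
    exact ⟨c⁻¹, inv_pos.2 hc, (hmem c hc.ne').1 hv⟩
  · rintro ⟨c, hc, hv⟩
    exact ⟨c⁻¹, inv_pos.2 hc, (hmem _ (inv_ne_zero hc.ne')).2 (by rwa [inv_inv])⟩

lemma Convex.exists_properCone_eq_tangentCone' (hK : Convex ℝ K) (hx : x ∈ K) :
    ∃ C : ProperCone ℝ E, (C : Set E) = tangentCone' K x := by
  have hpt : (ConvexCone.hull ℝ (-x +ᵥ K)).Pointed :=
    hK.mem_hull_vadd_neg_iff.2 ⟨1, one_pos, by simpa using hx⟩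
  refine ⟨Submodule.closure ((ConvexCone.hull ℝ (-x +ᵥ K)).toPointedCone hpt), ?_⟩
  rw [hK.tangentCone'_eq_closure hx, Submodule.coe_closure]
  congr 1
  ext v
  exact hK.mem_hull_vadd_neg_iff

end TangentCone

section InnerProductSpace

variable {E : Type*} [NormedAddCommGroup E] [InnerProductSpace ℝ E]

lemma convex_setOf_forall_inner_nonneg (s : Set E) : Convex ℝ {w | ∀ y ∈ s, 0 ≤ ⟪w, y⟫_ℝ} := by
  intro a ha b hb s t hs ht _ y hy
  rw [inner_add_left, real_inner_smul_left, real_inner_smul_left]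
  exact add_nonneg (mul_nonneg hs (ha y hy)) (mul_nonneg ht (hb y hy))

variable [CompleteSpace E]

lemma ProperCone.neg_mem_of_mem_intrinsicInterior_polar (C : ProperCone ℝ E) {ω v : E}
    (hω : -ω ∈ intrinsicInterior ℝ {w | ∀ y ∈ C, ⟪w, y⟫_ℝ ≤ 0}) (hv : v ∈ C)
    (hωv : ⟪ω, v⟫_ℝ = 0) : -v ∈ C := by
  rw [← C.innerDual_innerDual, ProperCone.mem_innerDual]
  intro w hw
  have hwv : ⟪-w, v⟫_ℝ = 0 :=
    eq_zero_of_nonpos_of_mem_intrinsicInterior (P := {w | ∀ y ∈ C, ⟪w, y⟫_ℝ ≤ 0})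
      ((innerₛₗ ℝ).flip v) (fun u hu => hu v hv) hω (by simpa using hωv)
      fun y hy => by simpa [real_inner_comm] using hw hy
  rw [inner_neg_left, neg_eq_zero] at hwv
  rw [inner_neg_right, hwv, neg_zero]

lemma Convex.neg_mem_tangentCone'_of_mem_intrinsicInterior_polar {K : Set E} (hK : Convex ℝ K)
    {x ω v : E} (hx : x ∈ K)
    (hω : -ω ∈ intrinsicInterior ℝ {w | ∀ y ∈ tangentCone' K x, ⟪w, y⟫_ℝ ≤ 0})
    (hv : v ∈ tangentCone' K x) (hωv : ⟪ω, v⟫_ℝ = 0) : -v ∈ tangentCone' K x := by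
  obtain ⟨C, hC⟩ := hK.exists_properCone_eq_tangentCone' hx
  rw [← hC] at hω hv ⊢
  exact C.neg_mem_of_mem_intrinsicInterior_polar hω hv hωv

end InnerProductSpace

theorem stmt_15_general {n p : ℕ} {E : Type*} [NormedAddCommGroup E] [InnerProductSpace ℝ E]
    [FiniteDimensional ℝ E]
    (K : Set E)
    -- `K` is a self-dual (hence closed convex) cone:
    (hK : K = {w : E | ∀ y ∈ K, 0 ≤ ⟪w, y⟫_ℝ})
    (f : EuclideanSpace ℝ (Fin n) → ℝ) (g : EuclideanSpace ℝ (Fin n) → E)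
    (h : EuclideanSpace ℝ (Fin n) → EuclideanSpace ℝ (Fin p))
    (xs : EuclideanSpace ℝ (Fin n)) (ω : E) (μ : EuclideanSpace ℝ (Fin p))
    -- `xs` is a KKT point with multipliers `ω ∈ K`, `μ`:
    (hfeas : g xs ∈ K ∧ h xs = 0)
    (hstat : gradient f xs - (fderiv ℝ g xs).adjoint ω + (fderiv ℝ h xs).adjoint μ = 0)
    -- strict complementarity: `−ω` lies in the relative (intrinsic) interior
    -- of the polar of the tangent cone `T_K(g(x*))`:
    (hstrict : -ω ∈ intrinsicInterior ℝ
      {w : E | ∀ y ∈ tangentCone' K (g xs), ⟪w, y⟫_ℝ ≤ 0}) :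
    critCone K f g h xs = critCone K f g h xs ∩ -critCone K f g h xs := by
  have hKconv : Convex ℝ K := hK ▸ convex_setOf_forall_inner_nonneg K
  refine Subset.antisymm (fun d hd => ⟨hd, ?_⟩) inter_subset_left
  obtain ⟨hfd, hhd, hgd⟩ := hd
  have hωd : ⟪ω, fderiv ℝ g xs d⟫_ℝ = 0 := by
    have := congrArg (⟪·, d⟫_ℝ) hstat
    simp only [inner_add_left, inner_sub_left, ContinuousLinearMap.adjoint_inner_left, hfd, hhd,
      inner_zero_left, inner_zero_right] at this
    linarith
  rw [Set.mem_neg]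
  refine ⟨by rw [inner_neg_right, hfd, neg_zero], by rw [map_neg, hhd, neg_zero], ?_⟩
  rw [map_neg]
  exact hKconv.neg_mem_tangentCone'_of_mem_intrinsicInterior_polar hfeas.1 hstrict hgd hωd

theorem stmt_15 {n p : ℕ} {E : Type*} [NormedAddCommGroup E] [InnerProductSpace ℝ E]
    [FiniteDimensional ℝ E]
    (K : Set E)
    -- `K` is a self-dual (hence closed convex) cone:
    (hK : K = {w : E | ∀ y ∈ K, 0 ≤ ⟪w, y⟫_ℝ})
    (f : EuclideanSpace ℝ (Fin n) → ℝ) (g : EuclideanSpace ℝ (Fin n) → E)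
    (h : EuclideanSpace ℝ (Fin n) → EuclideanSpace ℝ (Fin p))
    (hf : ContDiff ℝ 1 f) (hg : ContDiff ℝ 1 g) (hh : ContDiff ℝ 1 h)
    (xs : EuclideanSpace ℝ (Fin n)) (ω : E) (μ : EuclideanSpace ℝ (Fin p))
    -- `xs` is a KKT point with multipliers `ω ∈ K`, `μ`:
    (hfeas : g xs ∈ K ∧ h xs = 0) (hω : ω ∈ K)
    (hstat : gradient f xs - (fderiv ℝ g xs).adjoint ω + (fderiv ℝ h xs).adjoint μ = 0)
    (hcomp : ⟪g xs, ω⟫_ℝ = 0)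
    -- strict complementarity: `−ω` lies in the relative (intrinsic) interior
    -- of the polar of the tangent cone `T_K(g(x*))`:
    (hstrict : -ω ∈ intrinsicInterior ℝ
      {w : E | ∀ y ∈ tangentCone' K (g xs), ⟪w, y⟫_ℝ ≤ 0}) :
    critCone K f g h xs = critCone K f g h xs ∩ -critCone K f g h xs :=
  stmt_15_general K hK f g h xs ω μ hfeas hstat hstrict
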